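/- Let G be the H-join of graphs G_1,…,G_p, each G_i having order n_i, s_i distinct main eigenvalues, and t_i distinct eigenvalues overall. Then the spectrum of G (as a multiset of Σ n_i real eigenvalues) is the union of: for each i, each main eigenvalue μ of G_i with multiplicity m(μ) − 1; for each i, each non-main eigenvalue μ of G_i with its full multiplicity m(μ); and the s = Σ s_i eigenvalues of the H-join associated matrix W̃. -/

import Mathlib

/-!
The walk matrix `W_i` of `G_i` spans an `A(G_i)`-invariant subspace on which `A(G_i)` acts by the
companion matrix `C_i` of the main characteristic polynomial, whose eigenvalues are exactly the
main eigenvalues, each simple. Its orthogonal complement is invariant too and orthogonal to the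
all-ones vector; pick an orthonormal eigenbasis `F_i` of it. Extended by zero, the columns of `F_i`
remain eigenvectors of `A(G)`, because the join only adds constant blocks, which kill vectors of
zero sum; and `A(G)` maps the block-diagonal walk matrix `W` to `W W̃`. So `A(G)` is similar to
`diag(W̃, diag ν)` and each `A(G_i)` to `diag(C_i, diag ν_i)`, and the spectra compare as claimed.
-/

open Matrix

/-- The `H`-join of the family of graphs `G i`. -/
def SimpleGraph.hJoin {p : ℕ} (H : SimpleGraph (Fin p)) (n : Fin p → ℕ)
    (G : ∀ i, SimpleGraph (Fin (n i))) : SimpleGraph ((i : Fin p) × Fin (n i)) where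
  Adj x y := if h : x.1 = y.1 then (G x.1).Adj x.2 (Fin.cast (congrArg n h.symm) y.2)
             else H.Adj x.1 y.1
  symm := by
    constructor
    rintro ⟨i, a⟩ ⟨k, b⟩ hadj
    dsimp at *
    by_cases h : i = k
    · subst h
      rw [dif_pos rfl] at hadj ⊢
      simpa using ((G i).adj_symm (by simpa using hadj))
    · rw [dif_neg h] at hadj
      rw [dif_neg (Ne.symm h)]
      exact H.adj_symm hadj
  loopless := by
    constructor
    rintro ⟨i, a⟩ h
    rw [dif_pos rfl] at h
    simp at h

noncomputable instance {p : ℕ} (H : SimpleGraph (Fin p)) (n : Fin p → ℕ)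
    (G : ∀ i, SimpleGraph (Fin (n i))) : DecidableRel (H.hJoin n G).Adj :=
  Classical.decRel _

/-- `μ` is a main eigenvalue of the matrix `A`. -/
def Matrix.IsMainEig {m : ℕ} (A : Matrix (Fin m) (Fin m) ℝ) (μ : ℝ) : Prop :=
  ∃ v : Fin m → ℝ, A *ᵥ v = μ • v ∧ v ⬝ᵥ (fun _ => (1 : ℝ)) ≠ 0

open Polynomial

namespace Matrix

section BlockTriangular

variable {m κ ρ R : Type*} [Fintype m] [DecidableEq m] [Fintype κ] [DecidableEq κ] [Fintype ρ]
  [DecidableEq ρ] [CommRing R]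

theorem isUnit_fromCols_submatrix {W : Matrix m κ R}
    {F : Matrix m ρ R} (e : m ≃ κ ⊕ ρ) (hW : IsUnit (Wᵀ * W)) (hWF : Wᵀ * F = 0)
    (hF : Fᵀ * F = 1) : IsUnit ((fromCols W F).submatrix id e) := by
  set P := (fromCols W F).submatrix id e
  have hFW : Fᵀ * W = 0 := by simpa using congrArg transpose hWF
  have hgram : Pᵀ * P = (fromBlocks (Wᵀ * W) 0 0 1).submatrix e e := by
    rw [transpose_submatrix, ← submatrix_mul _ _ _ _ _ Function.bijective_id, transpose_fromCols,
      fromRows_mul_fromCols, hWF, hFW, hF]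
  rw [isUnit_iff_isUnit_det] at hW ⊢
  rw [← isUnit_mul_self_iff]
  nth_rw 1 [← det_transpose P]
  rwa [← det_mul, hgram, det_submatrix_equiv_self, det_fromBlocks_zero₂₁, det_one, mul_one]

theorem charpoly_eq_mul_of_mul_fromCols {A : Matrix m m R} {W : Matrix m κ R}
    {F : Matrix m ρ R} {C : Matrix κ κ R} {D : Matrix ρ ρ R}
    (hcard : Fintype.card κ + Fintype.card ρ = Fintype.card m) (hW : A * W = W * C)
    (hF : A * F = F * D) (hWW : IsUnit (Wᵀ * W)) (hWF : Wᵀ * F = 0) (hFF : Fᵀ * F = 1) :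
    A.charpoly = C.charpoly * D.charpoly := by
  let e : m ≃ κ ⊕ ρ := Fintype.equivOfCardEq (by rw [Fintype.card_sum, hcard])
  obtain ⟨U, hU⟩ := isUnit_fromCols_submatrix e hWW hWF hFF
  have hblock : A * fromCols W F = fromCols W F * fromBlocks C 0 0 D := by
    rw [mul_fromCols, fromCols_mul_fromBlocks, hW, hF]
    simp
  have hAU : A * U = U * (fromBlocks C 0 0 D).submatrix e e := by
    rw [hU, submatrix_mul_equiv, ← hblock, submatrix_mul _ _ id id e Function.bijective_id,
      submatrix_id_id]
  have hA : A = U * (fromBlocks C 0 0 D).submatrix e e * (U : Matrix m m R)⁻¹ := by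
    rw [← hAU, mul_assoc, ← coe_units_inv, Units.mul_inv, mul_one]
  have hreindex := charpoly_reindex e.symm (fromBlocks C 0 0 D)
  rw [reindex_apply, Equiv.symm_symm] at hreindex
  rw [hA, charpoly_units_conj, hreindex, charpoly_fromBlocks_zero₁₂]

end BlockTriangular

theorem isUnit_transpose_mul_self_of_rank_eq_card {m κ K : Type*} [Fintype m] [Fintype κ]
    [DecidableEq κ] [Field K] [LinearOrder K] [IsStrictOrderedRing K] {W : Matrix m κ K}
    (h : W.rank = Fintype.card κ) : IsUnit (Wᵀ * W) := by
  have hrange : LinearMap.range (Wᵀ * W).mulVecLin = ⊤ := Submodule.eq_top_of_finrank_eq <| by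
    rw [Module.finrank_fintype_fun_eq_card, ← h, ← rank_transpose_mul_self]
    rfl
  exact mulVec_surjective_iff_isUnit.mp (LinearMap.range_eq_top.mp hrange)

theorem aeval_mulVec_of_mulVec_eq_smul {m R : Type*} [Fintype m] [DecidableEq m] [CommRing R]
    (A : Matrix m m R) (q : R[X]) {μ : R} {v : m → R} (hv : A *ᵥ v = μ • v) :
    aeval A q *ᵥ v = q.eval μ • v := by
  have := Module.End.aeval_apply_of_mem_apply_eq_smul (f := toLinAlgEquiv' A) (p := q)
    (by rwa [toLinAlgEquiv'_apply])
  rw [aeval_algEquiv, AlgHom.comp_apply] at this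
  simpa [toLinAlgEquiv'_apply] using this

section Krylov

variable {m R : Type*} [Fintype m] [DecidableEq m] {s : ℕ}

/-- The companion matrix of `X ^ s - ∑ k, c k * X ^ k`. -/
def companion [Zero R] [One R] (c : Fin s → R) : Matrix (Fin s) (Fin s) R :=
  of fun x y => if (y : ℕ) = s - 1 then c x else if (x : ℕ) = y + 1 then 1 else 0

def krylov [CommRing R] (A : Matrix m m R) (v : m → R) (s : ℕ) : Matrix m (Fin s) R :=
  of fun a k => (A ^ (k : ℕ) *ᵥ v) a

variable [CommRing R]

theorem pow_mulVec_eq_sum_of_aeval_mulVec_eq_zero {A : Matrix m m R} {v : m → R}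
    {c : Fin s → R} (h : aeval A (X ^ s - ∑ k : Fin s, C (c k) * X ^ (k : ℕ)) *ᵥ v = 0) :
    A ^ s *ᵥ v = ∑ k, c k • (A ^ (k : ℕ) *ᵥ v) := by
  rw [map_sub, sub_mulVec, sub_eq_zero] at h
  simpa [sum_mulVec, Algebra.algebraMap_eq_smul_one, smul_mulVec] using h

theorem pos_of_pow_mulVec_eq_sum {A : Matrix m m R} {v : m → R} {c : Fin s → R}
    (h : A ^ s *ᵥ v = ∑ k, c k • (A ^ (k : ℕ) *ᵥ v)) (hv : v ≠ 0) : 0 < s := by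
  rcases s with _ | s
  · simp only [pow_zero, one_mulVec, Finset.univ_eq_empty, Finset.sum_empty] at h
    exact absurd h hv
  · exact s.succ_pos

theorem mul_krylov_eq_krylov_mul_companion {A : Matrix m m R} {v : m → R} {c : Fin s → R}
    (h : A ^ s *ᵥ v = ∑ k, c k • (A ^ (k : ℕ) *ᵥ v)) :
    A * krylov A v s = krylov A v s * companion c := by
  ext a k
  have hcol : (A * krylov A v s) a k = (A ^ ((k : ℕ) + 1) *ᵥ v) a := by
    rw [pow_succ', ← mulVec_mulVec]
    simp [krylov, mul_apply, mulVec, dotProduct]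
  rw [hcol, mul_apply]
  by_cases hk : (k : ℕ) = s - 1
  · rw [show (k : ℕ) + 1 = s by omega, h]
    simp [krylov, companion, hk, Finset.sum_apply, mul_comm]
  · rw [Finset.sum_eq_single ⟨k + 1, by omega⟩]
    · simp [krylov, companion, hk]
    · intro x _ hx
      have : (x : ℕ) ≠ k + 1 := fun h => hx (Fin.ext h)
      simp [companion, hk, this]
    · simp

theorem vecMul_eq_zero_of_krylov_transpose_mul_eq_zero {ρ : Type*} {A : Matrix m m R}
    {v : m → R} {c : Fin s → R} (h : A ^ s *ᵥ v = ∑ k, c k • (A ^ (k : ℕ) *ᵥ v))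
    {F : Matrix m ρ R} (hF : (krylov A v s)ᵀ * F = 0) : v ᵥ* F = 0 := by
  by_cases hv : v = 0
  · rw [hv, zero_vecMul]
  · ext r
    simpa [krylov, mul_apply, vecMul, dotProduct] using
      congrFun (congrFun hF ⟨0, pos_of_pow_mulVec_eq_sum h hv⟩) r

theorem vecMul_companion_of_eval (c : Fin s → R) {μ : R}
    (h : μ ^ s = ∑ k, c k * μ ^ (k : ℕ)) :
    (fun k : Fin s => μ ^ (k : ℕ)) ᵥ* companion c = μ • fun k : Fin s => μ ^ (k : ℕ) := by
  ext k
  simp only [vecMul, dotProduct, Pi.smul_apply, smul_eq_mul]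
  by_cases hk : (k : ℕ) = s - 1
  · simp only [companion, of_apply, hk, if_true]
    rw [← pow_succ', Nat.sub_add_cancel (by omega), h]
    exact Finset.sum_congr rfl fun x _ => mul_comm _ _
  · rw [Finset.sum_eq_single ⟨k + 1, by omega⟩]
    · simp [companion, hk, pow_succ']
    · intro x _ hx
      have : (x : ℕ) ≠ k + 1 := fun h => hx (Fin.ext h)
      simp [companion, hk, this]
    · simp

theorem roots_charpoly_companion {K : Type*} [Field K] (c : Fin s → K) (S : Finset K)
    (hS : ∏ μ ∈ S, (X - C μ) = X ^ s - ∑ k : Fin s, C (c k) * X ^ (k : ℕ)) :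
    (companion c).charpoly.roots = S.val := by
  have hcard : S.card = s := by
    have hdeg := congrArg natDegree hS
    rwa [natDegree_finsetProd_X_sub_C_eq_card, natDegree_eq_of_degree_eq_some (n := s) (by
      rw [degree_sub_eq_left_of_degree_lt (by simpa using degree_sum_fin_lt c), degree_X_pow])]
      at hdeg
  have hne := (companion c).charpoly_monic.ne_zero
  have hroot : ∀ μ ∈ S, (companion c).charpoly.IsRoot μ := by
    intro μ hμ
    have hs : 0 < s := hcard ▸ Finset.card_pos.mpr ⟨μ, hμ⟩
    have heval : μ ^ s = ∑ k, c k * μ ^ (k : ℕ) := by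
      have := congrArg (eval μ) hS
      rw [eval_prod, Finset.prod_eq_zero hμ (by simp), eval_sub, eval_pow, eval_X,
        eval_finsetSum] at this
      simp only [eval_mul, eval_C, eval_pow, eval_X] at this
      exact sub_eq_zero.mp this.symm
    rw [IsRoot, eval_charpoly, ← exists_vecMul_eq_zero_iff]
    refine ⟨fun k : Fin s => μ ^ (k : ℕ), fun h0 => ?_, ?_⟩
    · simpa using congrFun h0 ⟨0, hs⟩
    · rw [vecMul_sub, vecMul_companion_of_eval c heval, scalar_apply]
      simp
  have hle : S.val ≤ (companion c).charpoly.roots :=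
    (Multiset.le_iff_subset S.nodup).mpr fun μ hμ => (mem_roots hne).mpr (hroot μ hμ)
  refine (Multiset.eq_of_le_of_card_le hle ?_).symm
  calc Multiset.card (companion c).charpoly.roots ≤ (companion c).charpoly.natDegree :=
        card_roots' _
    _ = S.card := by rw [charpoly_natDegree_eq_dim, Fintype.card_fin, hcard]

end Krylov

theorem IsHermitian.aeval_prod_mulVec_one_eq_zero {n : ℕ} {A : Matrix (Fin n) (Fin n) ℝ}
    (hA : A.IsHermitian) {S : Finset ℝ} (hS : ∀ μ, A.IsMainEig μ → μ ∈ S) :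
    aeval A (∏ μ ∈ S, (X - C μ)) *ᵥ (fun _ => (1 : ℝ)) = 0 := by
  set b := hA.eigenvectorBasis
  set ones : EuclideanSpace ℝ (Fin n) := WithLp.toLp 2 fun _ => 1
  have hones : (fun _ => (1 : ℝ)) = ∑ k, inner ℝ (b k) ones • WithLp.ofLp (b k) := by
    simpa [ones] using congrArg WithLp.ofLp (b.sum_repr' ones).symm
  rw [hones, mulVec_sum]
  refine Finset.sum_eq_zero fun k _ => ?_
  rw [mulVec_smul, aeval_mulVec_of_mulVec_eq_smul _ _ (hA.mulVec_eigenvectorBasis k)]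
  by_cases hk : inner ℝ (b k) ones = 0
  · rw [hk, zero_smul]
  · have hmain : A.IsMainEig (hA.eigenvalues k) := by
      refine ⟨_, hA.mulVec_eigenvectorBasis k, fun h => hk ?_⟩
      simpa [ones, PiLp.inner_apply, dotProduct] using h
    rw [eval_prod, Finset.prod_eq_zero (hS _ hmain) (by simp), zero_smul, smul_zero]

theorem IsHermitian.exists_orthonormal_eigenvectors_orthogonal_to_cols {m κ : Type*} [Fintype m]
    [DecidableEq m] [Fintype κ] {A : Matrix m m ℝ} (hA : A.IsHermitian) {W : Matrix m κ ℝ}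
    {C : Matrix κ κ ℝ} (hAW : A * W = W * C) (d : ℕ) (hd : W.rank + d = Fintype.card m) :
    ∃ (F : Matrix m (Fin d) ℝ) (ν : Fin d → ℝ),
      A * F = F * diagonal ν ∧ Wᵀ * F = 0 ∧ Fᵀ * F = 1 := by
  classical
  set T := toEuclideanLin A
  set K := LinearMap.range (toEuclideanLin W)
  have hT : T.IsSymmetric := isSymmetric_toEuclideanLin_iff.mpr hA
  have hK : ∀ v ∈ K, T v ∈ K := by
    rintro _ ⟨x, rfl⟩
    refine ⟨WithLp.toLp 2 (C *ᵥ WithLp.ofLp x), ?_⟩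
    simp only [T, toLpLin_apply, mulVec_mulVec, hAW]
  have hKperp : ∀ v ∈ Kᗮ, T v ∈ Kᗮ := fun v hv u hu => by
    rw [← hT]
    exact hv _ (hK u hu)
  have hdim : Module.finrank ℝ Kᗮ = d := by
    have := K.finrank_add_finrank_orthogonal
    rw [finrank_euclideanSpace, ← hd, rank_eq_finrank_range_toLin W (PiLp.basisFun 2 ℝ m)
      (PiLp.basisFun 2 ℝ κ), ← toLpLin_eq_toLin] at this
    exact Nat.add_left_cancel this
  set b := (hT.restrict_invariant hKperp).eigenvectorBasis hdim
  set ν := (hT.restrict_invariant hKperp).eigenvalues hdim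
  refine ⟨of fun a r => (b r : EuclideanSpace ℝ m) a, ν, ?_, ?_, ?_⟩
  · ext a r
    have hcol : A *ᵥ WithLp.ofLp (b r : EuclideanSpace ℝ m) =
        ν r • WithLp.ofLp (b r : EuclideanSpace ℝ m) :=
      congrArg (fun v : Kᗮ => WithLp.ofLp (v : EuclideanSpace ℝ m))
        ((hT.restrict_invariant hKperp).apply_eigenvectorBasis hdim r)
    rw [mul_diagonal]
    exact (congrFun hcol a).trans (mul_comm _ _)
  · ext k r
    have hcol : WithLp.toLp 2 (W.col k) ∈ K :=
      ⟨WithLp.toLp 2 (Pi.single k 1), by simp only [toLpLin_apply, mulVec_single_one]⟩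
    have := (b r).2 _ hcol
    simp only [PiLp.inner_apply, Real.inner_apply, col_apply] at this
    simpa [mul_apply] using this
  · ext r r'
    have := orthonormal_iff_ite.mp b.orthonormal r r'
    simp only [Submodule.coe_inner, PiLp.inner_apply, Real.inner_apply] at this
    simpa [mul_apply, one_apply] using this

section BlockDiagonal

variable {ι l R : Type*} [Fintype ι] [DecidableEq ι] {α β γ : ι → Type*} [∀ i, Fintype (α i)]
  [∀ i, Fintype (β i)] [NonUnitalNonAssocSemiring R]

theorem mul_blockDiagonal'_apply (M : Matrix l (Σ i, α i) R) (X : ∀ i, Matrix (α i) (γ i) R)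
    (x : l) (j : ι) (k : γ j) : (M * blockDiagonal' X) x ⟨j, k⟩ = ∑ b, M x ⟨j, b⟩ * X j b k := by
  rw [mul_apply, Fintype.sum_sigma, Finset.sum_eq_single j]
  · simp [blockDiagonal'_apply_eq]
  · intro i _ hij
    simp [blockDiagonal'_apply_ne _ _ _ hij]
  · simp

theorem blockDiagonal'_mul_apply (X : ∀ i, Matrix (γ i) (β i) R) (M : Matrix (Σ i, β i) l R)
    (i : ι) (a : γ i) (y : l) : (blockDiagonal' X * M) ⟨i, a⟩ y = ∑ x, X i a x * M ⟨i, x⟩ y := by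
  rw [mul_apply, Fintype.sum_sigma, Finset.sum_eq_single i]
  · simp [blockDiagonal'_apply_eq]
  · intro j _ hij
    simp [blockDiagonal'_apply_ne _ _ _ hij.symm]
  · simp

end BlockDiagonal

end Matrix

namespace SimpleGraph

def walkMatrix {V : Type*} [Fintype V] [DecidableEq V] (Γ : SimpleGraph V) [DecidableRel Γ.Adj]
    (R : Type*) [CommRing R] (s : ℕ) : Matrix V (Fin s) R :=
  krylov (Γ.adjMatrix R) (fun _ => 1) s

variable {p : ℕ} (H : SimpleGraph (Fin p)) {n : Fin p → ℕ} (G : ∀ i, SimpleGraph (Fin (n i)))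

theorem hJoin_adj_same (i : Fin p) (a b : Fin (n i)) :
    (H.hJoin n G).Adj ⟨i, a⟩ ⟨i, b⟩ ↔ (G i).Adj a b := by
  simp [hJoin]

theorem hJoin_adj_of_ne {i j : Fin p} (hij : i ≠ j) (a : Fin (n i)) (b : Fin (n j)) :
    (H.hJoin n G).Adj ⟨i, a⟩ ⟨j, b⟩ ↔ H.Adj i j := by
  simp [hJoin, hij]

variable [∀ i, DecidableRel (G i).Adj]

theorem hJoin_adjMatrix_mul_blockDiagonal' {R : Type*} [NonAssocSemiring R] {ρ : Fin p → Type*}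
    [∀ i, Fintype (ρ i)] (X : ∀ i, Matrix (Fin (n i)) (ρ i) R)
    (hX : ∀ i, (fun _ => 1) ᵥ* X i = 0) :
    (H.hJoin n G).adjMatrix R * blockDiagonal' X =
      blockDiagonal' fun i => (G i).adjMatrix R * X i := by
  classical
  ext ⟨i, a⟩ ⟨j, k⟩
  rw [mul_blockDiagonal'_apply]
  by_cases hij : i = j
  · subst hij
    simp [hJoin_adj_same, blockDiagonal'_apply_eq, mul_apply]
  · have hsum : ∑ b, X j b k = 0 := by simpa [vecMul, dotProduct] using congrFun (hX j) k
    simp [hJoin_adj_of_ne H G hij, blockDiagonal'_apply_ne _ _ _ hij, hsum]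

variable [DecidableRel H.Adj] {s : Fin p → ℕ}

def hJoinAssociatedMatrix {R : Type*} [Semiring R] (c : ∀ i, Fin (s i) → R)
    (W : ∀ i, Matrix (Fin (n i)) (Fin (s i)) R) : Matrix (Σ i, Fin (s i)) (Σ i, Fin (s i)) R :=
  blockDiagonal' (fun i => companion (c i)) +
    of fun x y => if H.Adj x.1 y.1 ∧ (x.2 : ℕ) = 0 then ∑ a, W y.1 a y.2 else 0

theorem hJoinAssociatedMatrix_apply {R : Type*} [Semiring R] (c : ∀ i, Fin (s i) → R)
    (W : ∀ i, Matrix (Fin (n i)) (Fin (s i)) R) (x y : Σ i, Fin (s i)) :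
    H.hJoinAssociatedMatrix c W x y =
      if x.1 = y.1 then
        (if (y.2 : ℕ) = s x.1 - 1 then c x.1 x.2
         else if (x.2 : ℕ) = (y.2 : ℕ) + 1 then 1 else 0)
      else if H.Adj x.1 y.1 then
        (if (x.2 : ℕ) = 0 then ∑ a, W y.1 a y.2 else 0)
      else 0 := by
  obtain ⟨i, x⟩ := x
  obtain ⟨j, y⟩ := y
  by_cases hij : i = j
  · subst hij
    simp [hJoinAssociatedMatrix, blockDiagonal'_apply_eq, companion]
  · simp [hJoinAssociatedMatrix, blockDiagonal'_apply_ne _ _ _ hij, hij, ite_and]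

variable {R : Type*} [CommRing R] [Nontrivial R]

theorem hJoin_adjMatrix_mul_blockDiagonal'_walkMatrix (c : ∀ i, Fin (s i) → R)
    (hrec : ∀ i, (G i).adjMatrix R ^ s i *ᵥ (fun _ => 1) =
      ∑ k, c i k • ((G i).adjMatrix R ^ (k : ℕ) *ᵥ fun _ => 1)) :
    (H.hJoin n G).adjMatrix R * blockDiagonal' (fun i => (G i).walkMatrix R (s i)) =
      blockDiagonal' (fun i => (G i).walkMatrix R (s i)) *
        H.hJoinAssociatedMatrix c (fun i => (G i).walkMatrix R (s i)) := by
  ext ⟨i, a⟩ ⟨j, k⟩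
  rw [mul_blockDiagonal'_apply, blockDiagonal'_mul_apply]
  by_cases hij : i = j
  · subst hij
    have := congrFun (congrFun (mul_krylov_eq_krylov_mul_companion (hrec i)) a) k
    simp only [mul_apply] at this
    simpa [hJoin_adj_same, adjMatrix_apply, hJoinAssociatedMatrix, blockDiagonal'_apply_eq,
      walkMatrix] using this
  · have hs : 0 < s i := pos_of_pow_mulVec_eq_sum (hrec i) fun h => one_ne_zero (congrFun h a)
    have hzero : ∀ x : Fin (s i), (x : ℕ) = 0 ↔ x = ⟨0, hs⟩ :=
      fun x => (Fin.ext_iff (b := ⟨0, hs⟩)).symm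
    by_cases hadj : H.Adj i j <;>
      simp [hJoinAssociatedMatrix, blockDiagonal'_apply_ne _ _ _ hij, adjMatrix_apply,
        hJoin_adj_of_ne H G hij, hadj, hzero, walkMatrix, krylov]

theorem charpoly_hJoin_adjMatrix (c : ∀ i, Fin (s i) → R)
    (hrec : ∀ i, (G i).adjMatrix R ^ s i *ᵥ (fun _ => 1) =
      ∑ k, c i k • ((G i).adjMatrix R ^ (k : ℕ) *ᵥ fun _ => 1))
    {d : Fin p → ℕ} (hd : ∀ i, s i + d i = n i)
    (F : ∀ i, Matrix (Fin (n i)) (Fin (d i)) R) (ν : ∀ i, Fin (d i) → R)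
    (hAF : ∀ i, (G i).adjMatrix R * F i = F i * diagonal (ν i))
    (hWW : ∀ i, IsUnit (((G i).walkMatrix R (s i))ᵀ * (G i).walkMatrix R (s i)))
    (hWF : ∀ i, ((G i).walkMatrix R (s i))ᵀ * F i = 0) (hFF : ∀ i, (F i)ᵀ * F i = 1) :
    ((H.hJoin n G).adjMatrix R).charpoly =
      (H.hJoinAssociatedMatrix c fun i => (G i).walkMatrix R (s i)).charpoly *
        ∏ i, (diagonal (ν i)).charpoly := by
  have hAF' : (H.hJoin n G).adjMatrix R * blockDiagonal' F =
      blockDiagonal' F * blockDiagonal' fun i => diagonal (ν i) := by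
    rw [H.hJoin_adjMatrix_mul_blockDiagonal' G F fun i =>
      vecMul_eq_zero_of_krylov_transpose_mul_eq_zero (hrec i) (hWF i), ← blockDiagonal'_mul]
    exact congrArg blockDiagonal' (funext hAF)
  rw [charpoly_eq_mul_of_mul_fromCols (by simp [← Finset.sum_add_distrib, hd])
      (H.hJoin_adjMatrix_mul_blockDiagonal'_walkMatrix G c hrec) hAF',
    blockDiagonal'_diagonal, charpoly_diagonal, Fintype.prod_sigma]
  · simp only [charpoly_diagonal]
  · rw [blockDiagonal'_transpose, ← blockDiagonal'_mul]
    exact (Pi.isUnit_iff.2 hWW).map (blockDiagonal'RingHom _ R)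
  · rw [blockDiagonal'_transpose, ← blockDiagonal'_mul]
    simp only [hWF]
    exact blockDiagonal'_zero
  · rw [blockDiagonal'_transpose, ← blockDiagonal'_mul]
    simp only [hFF]
    exact blockDiagonal'_one

end SimpleGraph

open Polynomial in
theorem hJoin_spectrum_general {p : ℕ} (H : SimpleGraph (Fin p))
    [DecidableRel H.Adj] (n : Fin p → ℕ) (G : ∀ i, SimpleGraph (Fin (n i)))
    [∀ i, DecidableRel (G i).Adj]
    -- `s i` is the number of distinct main eigenvalues of `G i`
    (s : Fin p → ℕ)
    -- `Wmat i` is the walk matrix of `G i`, of full column rank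
    (Wmat : ∀ i, Matrix (Fin (n i)) (Fin (s i)) ℝ)
    (hWmat : ∀ i a k, Wmat i a k = (((G i).adjMatrix ℝ ^ (k : ℕ)) *ᵥ fun _ => (1 : ℝ)) a)
    (hrank : ∀ i, (Wmat i).rank = s i)
    -- `c i` lists the coefficients of the main characteristic polynomial of `G i`
    (S : Fin p → Finset ℝ) (hS : ∀ i μ, μ ∈ S i ↔ ((G i).adjMatrix ℝ).IsMainEig μ)
    (c : ∀ i, Fin (s i) → ℝ)
    (hc : ∀ i, ∏ μ ∈ S i, (X - C μ) =
      X ^ (s i) - ∑ k : Fin (s i), C (c i k) * X ^ (k : ℕ))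
    -- `Wt` is the `H`-join associated matrix `W̃`
    (Wt : Matrix ((i : Fin p) × Fin (s i)) ((i : Fin p) × Fin (s i)) ℝ)
    (hWt : ∀ x y, Wt x y =
      if x.1 = y.1 then
        -- companion matrix `C(m_{G_{x.1}})`
        (if (y.2 : ℕ) = s x.1 - 1 then c x.1 x.2
         else if (x.2 : ℕ) = (y.2 : ℕ) + 1 then 1 else 0)
      else if H.Adj x.1 y.1 then
        -- `M_{x.1, y.1}`: first row `jᵀ W_{G_{y.1}}`, zeros elsewhere
        (if (x.2 : ℕ) = 0 then ∑ a, Wmat y.1 a y.2 else 0)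
      else 0) :
    ((H.hJoin n G).adjMatrix ℝ).charpoly.roots =
      (∑ i : Fin p, (((G i).adjMatrix ℝ).charpoly.roots - (S i).val))
        + Wt.charpoly.roots := by
  obtain rfl : Wt = H.hJoinAssociatedMatrix c Wmat :=
    Matrix.ext fun x y => (hWt x y).trans (H.hJoinAssociatedMatrix_apply c Wmat x y).symm
  obtain rfl : Wmat = fun i => (G i).walkMatrix ℝ (s i) := funext fun i => Matrix.ext (hWmat i)
  have hrec : ∀ i, (G i).adjMatrix ℝ ^ s i *ᵥ (fun _ => 1) =
      ∑ k, c i k • ((G i).adjMatrix ℝ ^ (k : ℕ) *ᵥ fun _ => 1) := fun i =>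
    pow_mulVec_eq_sum_of_aeval_mulVec_eq_zero <| hc i ▸
      ((G i).isHermitian_adjMatrix ℝ).aeval_prod_mulVec_one_eq_zero fun μ h => (hS i μ).2 h
  have hAW : ∀ i, (G i).adjMatrix ℝ * (G i).walkMatrix ℝ (s i) =
      (G i).walkMatrix ℝ (s i) * companion (c i) := fun i =>
    mul_krylov_eq_krylov_mul_companion (hrec i)
  have hWW : ∀ i, IsUnit (((G i).walkMatrix ℝ (s i))ᵀ * (G i).walkMatrix ℝ (s i)) := fun i =>
    isUnit_transpose_mul_self_of_rank_eq_card (by rw [hrank, Fintype.card_fin])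
  have hdim : ∀ i, s i + (n i - s i) = n i := fun i =>
    Nat.add_sub_cancel' (by simpa [hrank] using ((G i).walkMatrix ℝ (s i)).rank_le_card_height)
  choose F ν hAF hWF hFF using fun i =>
    ((G i).isHermitian_adjMatrix ℝ).exists_orthonormal_eigenvectors_orthogonal_to_cols (hAW i)
      (n i - s i) (by rw [hrank, Fintype.card_fin, hdim])
  have hroots : ∀ i, ((G i).adjMatrix ℝ).charpoly.roots - (S i).val =
      (diagonal (ν i)).charpoly.roots := fun i => by
    rw [charpoly_eq_mul_of_mul_fromCols (by simp [hdim]) (hAW i) (hAF i) (hWW i) (hWF i) (hFF i),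
      roots_mul (mul_ne_zero (charpoly_monic _).ne_zero (charpoly_monic _).ne_zero),
      roots_charpoly_companion _ _ (hc i), add_tsub_cancel_left]
  have hprod : ∏ i, (diagonal (ν i)).charpoly ≠ 0 :=
    (monic_prod_of_monic _ _ fun i _ => charpoly_monic _).ne_zero
  rw [H.charpoly_hJoin_adjMatrix G c hrec hdim F ν hAF hWW hWF hFF,
    roots_mul (mul_ne_zero (charpoly_monic _).ne_zero hprod), roots_prod _ _ hprod, add_comm,
    Finset.sum_congr rfl fun i _ => hroots i]
  rfl

open Polynomial in
/-- The spectrum of the `H`-join `G` of arbitrary graphs `G_1, …, G_p` (as a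
multiset: the roots of the characteristic polynomial of its adjacency matrix) is
the union over `i` of the spectrum of `G_i` with one copy of each main eigenvalue
removed (so each main eigenvalue keeps multiplicity `m(μ) - 1` and each non-main
eigenvalue keeps its full multiplicity), together with the `s = Σ sᵢ` eigenvalues
of the `H`-join associated matrix `W̃`. -/
theorem hJoin_spectrum {p : ℕ} (H : SimpleGraph (Fin p))
    [DecidableRel H.Adj] (n : Fin p → ℕ) (G : ∀ i, SimpleGraph (Fin (n i)))
    [∀ i, DecidableRel (G i).Adj]
    -- `s i` is the number of distinct main eigenvalues of `G i`
    (s : Fin p → ℕ) (hs : ∀ i, s i = {μ : ℝ | ((G i).adjMatrix ℝ).IsMainEig μ}.ncard)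
    -- `Wmat i` is the walk matrix of `G i`, of full column rank
    (Wmat : ∀ i, Matrix (Fin (n i)) (Fin (s i)) ℝ)
    (hWmat : ∀ i a k, Wmat i a k = (((G i).adjMatrix ℝ ^ (k : ℕ)) *ᵥ fun _ => (1 : ℝ)) a)
    (hrank : ∀ i, (Wmat i).rank = s i)
    -- `c i` lists the coefficients of the main characteristic polynomial of `G i`
    (S : Fin p → Finset ℝ) (hS : ∀ i μ, μ ∈ S i ↔ ((G i).adjMatrix ℝ).IsMainEig μ)
    (c : ∀ i, Fin (s i) → ℝ)
    (hc : ∀ i, ∏ μ ∈ S i, (X - C μ) =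
      X ^ (s i) - ∑ k : Fin (s i), C (c i k) * X ^ (k : ℕ))
    -- `Wt` is the `H`-join associated matrix `W̃`
    (Wt : Matrix ((i : Fin p) × Fin (s i)) ((i : Fin p) × Fin (s i)) ℝ)
    (hWt : ∀ x y, Wt x y =
      if x.1 = y.1 then
        -- companion matrix `C(m_{G_{x.1}})`
        (if (y.2 : ℕ) = s x.1 - 1 then c x.1 x.2
         else if (x.2 : ℕ) = (y.2 : ℕ) + 1 then 1 else 0)
      else if H.Adj x.1 y.1 then
        -- `M_{x.1, y.1}`: first row `jᵀ W_{G_{y.1}}`, zeros elsewhere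
        (if (x.2 : ℕ) = 0 then ∑ a, Wmat y.1 a y.2 else 0)
      else 0) :
    ((H.hJoin n G).adjMatrix ℝ).charpoly.roots =
      (∑ i : Fin p, (((G i).adjMatrix ℝ).charpoly.roots - (S i).val))
        + Wt.charpoly.roots :=
  hJoin_spectrum_general H n G s Wmat hWmat hrank S hS c hc Wt hWt
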